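/- For every fixed real t > 0, the t-channel correction factor of the corrected Veneziano amplitude grows like the cube of the logarithm of s: lim_{s→∞} C(t,s) / (log s)³ = −1, where C(a,b) = (ψ(a) − ψ(a+b))³ + 3(ψ'(a) − ψ'(a+b))(ψ(a) − ψ(a+b)) + ψ''(a) − ψ''(a+b). (Only the digamma term ψ⁰ contributes to the leading Regge behaviour of the correction.) -/

import Mathlib

/-- The digamma function `ψ(x) = Γ'(x)/Γ(x)`. -/
noncomputable def digamma (x : ℝ) : ℝ :=
  deriv Real.Gamma x / Real.Gamma x

/-- `C(a,b) = (ψ(a)-ψ(a+b))³ + 3(ψ'(a)-ψ'(a+b))(ψ(a)-ψ(a+b)) + ψ''(a)-ψ''(a+b)`. -/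
noncomputable def Cfun (a b : ℝ) : ℝ :=
  (digamma a - digamma (a + b)) ^ 3
    + 3 * (deriv digamma a - deriv digamma (a + b)) * (digamma a - digamma (a + b))
    + deriv (deriv digamma) a - deriv (deriv digamma) (a + b)

/-!
Log-convexity of `Γ` squeezes `ψ(x)` between `log (x - 1)` and `log x`, so `ψ(t + s) ~ log s`.
The recurrence `ψ(x + 1) = ψ(x) + 1/x`, differentiated, shows that `ψ'` and `ψ''` change by
`-1/x²` and `2/x³` over a unit step; these are summable, so `ψ'` and `ψ''` stay bounded at
infinity. Dividing `C(t, s)` by `(log s)³`, only the term `(ψ(t) - ψ(t + s))³` survives.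
-/

open Real Filter Set Topology Asymptotics

theorem deriv_comp_add_one_eq {f g : ℝ → ℝ} {g' x : ℝ}
    (hfg : (fun y => f (y + 1)) =ᶠ[𝓝 x] fun y => f y + g y) (hf : DifferentiableAt ℝ f x)
    (hg : HasDerivAt g g' x) : deriv f (x + 1) = deriv f x + g' := by
  rw [← deriv_comp_add_const, hfg.deriv_eq]
  exact (hf.hasDerivAt.add hg).deriv

theorem isBigO_one_atTop_of_abs_sub_add_one_le {f g : ℝ → ℝ} {a : ℝ}
    (hf : ContinuousOn f (Icc a (a + 1))) (hstep : ∀ x ≥ a, |f (x + 1) - f x| ≤ g x)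
    (hg : AntitoneOn g (Ici a)) (hsum : Summable fun k : ℕ => g (a + k)) :
    f =O[atTop] fun _ => (1 : ℝ) := by
  obtain ⟨M, hM⟩ := isCompact_Icc.exists_bound_of_continuousOn hf
  have hg_nonneg (k : ℕ) : 0 ≤ g (a + k) :=
    (abs_nonneg _).trans (hstep _ (le_add_of_nonneg_right k.cast_nonneg))
  have hshift (n : ℕ) (u : ℝ) (hu : u ∈ Icc a (a + 1)) :
      |f (u + n)| ≤ M + ∑ k ∈ Finset.range n, g (a + k) := by
    induction n with
    | zero => simpa using hM u hu
    | succ n ih =>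
      have hstep_n : |f (u + n + 1)| ≤ |f (u + n)| + g (u + n) := by
        have := abs_sub_abs_le_abs_sub (f (u + n + 1)) (f (u + n))
        linarith [hstep (u + n) (by linarith [hu.1, n.cast_nonneg (α := ℝ)])]
      have hg_n : g (u + n) ≤ g (a + n) :=
        hg (by simp [mem_Ici]) (by simp [mem_Ici]; linarith [hu.1]) (by linarith [hu.1])
      rw [Finset.sum_range_succ, Nat.cast_succ, ← add_assoc]
      linarith
  rw [isBigO_one_iff]
  refine isBoundedUnder_of_eventually_le (a := M + ∑' k : ℕ, g (a + k)) ?_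
  filter_upwards [eventually_ge_atTop a] with x hx
  set n := ⌊x - a⌋₊
  have hu : x - n ∈ Icc a (a + 1) :=
    ⟨by linarith [Nat.floor_le (sub_nonneg.2 hx)], by linarith [Nat.lt_floor_add_one (x - a)]⟩
  calc ‖f x‖ = |f (x - n + n)| := by rw [sub_add_cancel, norm_eq_abs]
    _ ≤ M + ∑ k ∈ Finset.range n, g (a + k) := hshift n _ hu
    _ ≤ M + ∑' k : ℕ, g (a + k) := by
      gcongr
      exact hsum.sum_le_tsum _ fun k _ => hg_nonneg k

theorem tendsto_const_sub_comp_add_div_log_pow {f : ℝ → ℝ}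
    (hf : f =O[atTop] fun _ => (1 : ℝ)) (c t : ℝ) {k : ℕ} (hk : k ≠ 0) :
    Tendsto (fun s => (c - f (t + s)) / log s ^ k) atTop (𝓝 0) := by
  have hbdd : (fun s => c - f (t + s)) =O[atTop] fun _ => (1 : ℝ) :=
    (isBigO_const_one ℝ c atTop).sub
      (hf.comp_tendsto (tendsto_atTop_add_const_left _ t tendsto_id))
  have hlog : (fun _ => (1 : ℝ)) =o[atTop] fun s => log s ^ k :=
    (isLittleO_one_left_iff ℝ).2 <|
      tendsto_norm_atTop_atTop.comp ((tendsto_pow_atTop hk).comp tendsto_log_atTop)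
  exact (hbdd.trans_isLittleO hlog).tendsto_div_nhds_zero

theorem tendsto_log_add_div_log (c : ℝ) :
    Tendsto (fun s => log (s + c) / log s) atTop (𝓝 1) := by
  have h := ((tendsto_log_comp_add_sub_log c).div_atTop tendsto_log_atTop).add_const 1
  rw [zero_add] at h
  refine h.congr' ?_
  filter_upwards [eventually_gt_atTop 1] with s hs
  rw [sub_div, div_self (log_pos hs).ne', sub_add_cancel]

theorem contDiffOn_Gamma_Ioi {n : WithTop ℕ∞} : ContDiffOn ℝ n Gamma (Ioi 0) := by
  have hU : IsOpen {z : ℂ | 0 < z.re} := isOpen_lt continuous_const Complex.continuous_re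
  have hℂ : ContDiffOn ℂ n Complex.Gamma {z : ℂ | 0 < z.re} := by
    refine DifferentiableOn.contDiffOn (fun z hz => ?_) hU
    refine (Complex.differentiableAt_Gamma z fun m hm => ?_).differentiableWithinAt
    have : (0 : ℝ) < -m := by simpa [hm] using hz
    linarith [m.cast_nonneg (α := ℝ)]
  intro x hx
  have := (hℂ.contDiffAt (hU.mem_nhds (by simpa using hx))).real_of_complex
  simpa [Complex.Gamma_ofReal] using this.contDiffWithinAt

theorem contDiffOn_digamma {n : WithTop ℕ∞} : ContDiffOn ℝ n digamma (Ioi 0) :=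
  (contDiffOn_Gamma_Ioi.deriv_of_isOpen isOpen_Ioi le_rfl).div contDiffOn_Gamma_Ioi
    fun _ hx => (Gamma_pos_of_pos hx).ne'

theorem differentiableAt_Gamma_of_pos {x : ℝ} (hx : 0 < x) : DifferentiableAt ℝ Gamma x :=
  (contDiffOn_Gamma_Ioi (n := 1).differentiableOn one_ne_zero).differentiableAt
    (Ioi_mem_nhds hx)

theorem digamma_eq_deriv_log_Gamma {x : ℝ} (hx : 0 < x) :
    digamma x = deriv (log ∘ Gamma) x :=
  (deriv.log (differentiableAt_Gamma_of_pos hx) (Gamma_pos_of_pos hx).ne').symm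

theorem log_Gamma_add_one {x : ℝ} (hx : 0 < x) :
    (log ∘ Gamma) (x + 1) = (log ∘ Gamma) x + log x := by
  simp only [Function.comp_apply, Gamma_add_one hx.ne',
    log_mul hx.ne' (Gamma_pos_of_pos hx).ne', add_comm]

theorem differentiableAt_log_Gamma {x : ℝ} (hx : 0 < x) :
    DifferentiableAt ℝ (log ∘ Gamma) x :=
  (differentiableAt_Gamma_of_pos hx).log (Gamma_pos_of_pos hx).ne'

theorem digamma_le_log {x : ℝ} (hx : 0 < x) : digamma x ≤ log x := by
  rw [digamma_eq_deriv_log_Gamma hx]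
  refine (convexOn_log_Gamma.deriv_le_slope hx (show 0 < x + 1 by linarith) (by linarith)
    (differentiableAt_log_Gamma hx)).trans_eq ?_
  rw [slope_def_field, log_Gamma_add_one hx]
  ring

theorem log_le_digamma_add_one {x : ℝ} (hx : 0 < x) : log x ≤ digamma (x + 1) := by
  have hx1 : 0 < x + 1 := by linarith
  rw [digamma_eq_deriv_log_Gamma hx1]
  refine (convexOn_log_Gamma.slope_le_deriv hx hx1 (by linarith)
    (differentiableAt_log_Gamma hx1)).trans_eq' ?_
  rw [slope_def_field, log_Gamma_add_one hx]
  ring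

theorem tendsto_digamma_add_div_log (t : ℝ) :
    Tendsto (fun s => digamma (t + s) / log s) atTop (𝓝 1) := by
  refine tendsto_of_tendsto_of_tendsto_of_le_of_le' (tendsto_log_add_div_log (t - 1))
    (tendsto_log_add_div_log t) ?_ ?_
  all_goals
    filter_upwards [eventually_gt_atTop 1, eventually_gt_atTop (1 - t)] with s hs hst
    gcongr
    · exact (log_pos hs).le
  · simpa [add_comm, add_sub_assoc'] using log_le_digamma_add_one (x := s + (t - 1)) (by linarith)
  · simpa [add_comm] using digamma_le_log (x := t + s) (by linarith)

theorem digamma_add_one {x : ℝ} (hx : 0 < x) : digamma (x + 1) = digamma x + x⁻¹ := by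
  have hrec : (fun y => (log ∘ Gamma) (y + 1)) =ᶠ[𝓝 x] fun y => (log ∘ Gamma) y + log y := by
    filter_upwards [eventually_gt_nhds hx] with y hy using log_Gamma_add_one hy
  rw [digamma_eq_deriv_log_Gamma hx, digamma_eq_deriv_log_Gamma (by linarith)]
  exact deriv_comp_add_one_eq hrec (differentiableAt_log_Gamma hx) (hasDerivAt_log hx.ne')

theorem deriv_digamma_add_one {x : ℝ} (hx : 0 < x) :
    deriv digamma (x + 1) = deriv digamma x - (x ^ 2)⁻¹ := by
  have hrec : (fun y => digamma (y + 1)) =ᶠ[𝓝 x] fun y => digamma y + y⁻¹ := by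
    filter_upwards [eventually_gt_nhds hx] with y hy using digamma_add_one hy
  rw [sub_eq_add_neg]
  exact deriv_comp_add_one_eq hrec
    ((contDiffOn_digamma (n := 1).differentiableOn one_ne_zero).differentiableAt
      (Ioi_mem_nhds hx)) (hasDerivAt_inv hx.ne')

theorem deriv_deriv_digamma_add_one {x : ℝ} (hx : 0 < x) :
    deriv (deriv digamma) (x + 1) = deriv (deriv digamma) x + 2 * (x ^ 3)⁻¹ := by
  have hinv_sq : HasDerivAt (fun y => -(y ^ 2)⁻¹) (2 * (x ^ 3)⁻¹) x := by
    refine ((hasDerivAt_pow 2 x).fun_inv (by positivity)).fun_neg.congr_deriv ?_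
    field_simp
    ring
  have hrec : (fun y => deriv digamma (y + 1)) =ᶠ[𝓝 x]
      fun y => deriv digamma y + -(y ^ 2)⁻¹ := by
    filter_upwards [eventually_gt_nhds hx] with y hy
    rw [deriv_digamma_add_one hy, sub_eq_add_neg]
  exact deriv_comp_add_one_eq hrec
    (((contDiffOn_digamma (n := 2).deriv_of_isOpen isOpen_Ioi (by norm_num)).differentiableOn
      one_ne_zero).differentiableAt (Ioi_mem_nhds hx)) hinv_sq

theorem summable_inv_one_add_nat_sq : Summable fun k : ℕ => ((1 + k : ℝ) ^ 2)⁻¹ := by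
  simpa [add_comm] using (summable_nat_add_iff 1).2 (Real.summable_nat_pow_inv.2 one_lt_two)

-- `2/x²` dominates on `[1, ∞)` both unit-step increments, `1/x²` of `ψ'` and `2/x³` of `ψ''`.
theorem antitoneOn_two_mul_inv_sq : AntitoneOn (fun x : ℝ => 2 * (x ^ 2)⁻¹) (Ici 1) := by
  intro x hx y hy hxy
  have : (0 : ℝ) < x := lt_of_lt_of_le one_pos hx
  dsimp only
  gcongr

theorem deriv_digamma_isBigO_one : deriv digamma =O[atTop] fun _ => (1 : ℝ) := by
  refine isBigO_one_atTop_of_abs_sub_add_one_le (a := 1) ?_ (fun x hx => ?_)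
    antitoneOn_two_mul_inv_sq (summable_inv_one_add_nat_sq.mul_left 2)
  · exact (contDiffOn_digamma (n := 1).continuousOn_deriv_of_isOpen isOpen_Ioi le_rfl).mono
      fun x hx => lt_of_lt_of_le one_pos hx.1
  · rw [deriv_digamma_add_one (by linarith), sub_sub_cancel_left, abs_neg,
      abs_of_pos (by positivity)]
    linarith [inv_nonneg.2 (sq_nonneg x)]

theorem deriv_deriv_digamma_isBigO_one :
    deriv (deriv digamma) =O[atTop] fun _ => (1 : ℝ) := by
  refine isBigO_one_atTop_of_abs_sub_add_one_le (a := 1) ?_ (fun x hx => ?_)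
    antitoneOn_two_mul_inv_sq (summable_inv_one_add_nat_sq.mul_left 2)
  · exact (contDiffOn_digamma (n := 2).deriv_of_isOpen isOpen_Ioi (by norm_num)
      |>.continuousOn_deriv_of_isOpen isOpen_Ioi le_rfl).mono
      fun x hx => lt_of_lt_of_le one_pos hx.1
  · have hx0 : 0 < x := by linarith
    rw [deriv_deriv_digamma_add_one hx0, add_sub_cancel_left, abs_of_pos (by positivity)]
    gcongr
    norm_num

theorem Cfun_t_channel_regge_general (t : ℝ) :
    Filter.Tendsto (fun s : ℝ => Cfun t s / (Real.log s) ^ 3) Filter.atTop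
      (nhds (-1)) := by
  have hψ : Tendsto (fun s => (digamma t - digamma (t + s)) / log s) atTop (𝓝 (-1)) := by
    have := (tendsto_const_nhds (x := digamma t)).div_atTop tendsto_log_atTop
      |>.sub (tendsto_digamma_add_div_log t)
    simpa [sub_div] using this
  have hψ' := tendsto_const_sub_comp_add_div_log_pow deriv_digamma_isBigO_one
    (deriv digamma t) t two_ne_zero
  have hψ'' := tendsto_const_sub_comp_add_div_log_pow deriv_deriv_digamma_isBigO_one
    (deriv (deriv digamma) t) t three_ne_zero
  have hlim := ((hψ.pow 3).add ((hψ'.const_mul 3).mul hψ)).add hψ''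
  rw [show (-1 : ℝ) ^ 3 + 3 * 0 * -1 + 0 = -1 by norm_num] at hlim
  refine hlim.congr' ?_
  filter_upwards [eventually_gt_atTop 1] with s hs
  have hlog_ne : log s ≠ 0 := (log_pos hs).ne'
  unfold Cfun
  field_simp
  ring

/-- For fixed `t > 0`, the t-channel correction factor grows like `-(log s)³`:
`lim_{s→∞} C(t,s)/(log s)³ = -1`. -/
theorem Cfun_t_channel_regge (t : ℝ) (ht : 0 < t) :
    Filter.Tendsto (fun s : ℝ => Cfun t s / (Real.log s) ^ 3) Filter.atTop
      (nhds (-1)) :=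
  Cfun_t_channel_regge_general t
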